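/- Let f : ℝ₊ⁿ → [0,∞) be Borel measurable, monotone and subadditive, let τ_1,…,τ_n ≥ 0, let Z_1,…,Z_n be nonnegative random variables with ℙ(Z_i > τ_i) ≥ p for every i, for some p > 0, and let k ≥ 1. Then for every nonempty S ⊆ {1,…,n} with |S| ≤ k: 𝔼[f(Z_S)] ≥ (p/k) · f(τ_S), where τ_S ∈ ℝⁿ has i-th coordinate τ_i for i ∈ S and 0 otherwise. -/

import Mathlib

open MeasureTheory

/-!
By subadditivity, `f (τ_S) ≤ ∑_{i ∈ S} f (τ_{i})`, so some `i ∈ S` has `f (τ_{i}) ≥ f (τ_S) / |S|`.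
On the event `τ i < Z i`, which has probability at least `p`, monotonicity gives
`f (Z_S) ≥ f (τ_{i})`; Markov's inequality then yields `𝔼[f (Z_S)] ≥ p f (τ_S) / |S| ≥ (p / k) f (τ_S)`.
-/

/-- For a subset `S` of coordinates, `mask S x` is the vector agreeing with `x` on `S`
and equal to `0` outside `S`. -/
def mask {n : ℕ} (S : Finset (Fin n)) (x : Fin n → ℝ) : Fin n → ℝ :=
  fun i => if i ∈ S then x i else 0

section Mask

variable {n : ℕ} {S T : Finset (Fin n)} {x y : Fin n → ℝ}

lemma mask_nonneg (hx : 0 ≤ x) : 0 ≤ mask S x := by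
  intro i
  unfold mask
  split_ifs
  exacts [hx i, le_rfl]

lemma mask_eq_sum_mask_singleton : mask S x = ∑ i ∈ S, mask {i} x := by
  funext j
  simp [mask, Finset.sum_apply]

lemma mask_le_mask (hST : S ⊆ T) (hxy : ∀ i ∈ S, x i ≤ y i) (hy : 0 ≤ y) :
    mask S x ≤ mask T y := by
  intro i
  unfold mask
  split_ifs with hS hT
  exacts [hxy i hS, absurd (hST hS) hT, hy i, le_rfl]

variable (f : (Fin n → ℝ) → ℝ)

lemma apply_mask_le_sum_apply_mask_singleton
    (hf_subadd : ∀ x y : Fin n → ℝ, 0 ≤ x → 0 ≤ y → f (x + y) ≤ f x + f y)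
    (hx : 0 ≤ x) (hS : S.Nonempty) :
    f (mask S x) ≤ ∑ i ∈ S, f (mask {i} x) := by
  rw [mask_eq_sum_mask_singleton]
  exact Finset.le_sum_nonempty_of_subadditive_on_pred f (0 ≤ ·) hf_subadd
    (fun _ _ => add_nonneg) _ S hS (fun _ _ => mask_nonneg hx)

lemma exists_apply_mask_div_card_le_apply_mask_singleton
    (hf_subadd : ∀ x y : Fin n → ℝ, 0 ≤ x → 0 ≤ y → f (x + y) ≤ f x + f y)
    (hx : 0 ≤ x) (hS : S.Nonempty) :
    ∃ i ∈ S, f (mask S x) / S.card ≤ f (mask {i} x) := by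
  have hcard : (S.card : ℝ) ≠ 0 := by exact_mod_cast hS.card_ne_zero
  apply Finset.exists_le_of_sum_le hS
  rw [Finset.sum_const, nsmul_eq_mul, mul_div_cancel₀ _ hcard]
  exact apply_mask_le_sum_apply_mask_singleton f hf_subadd hx hS

end Mask

theorem expectation_mask_ge_threshold_general
    {Ωs : Type*} [MeasurableSpace Ωs] (μ : Measure Ωs) [IsProbabilityMeasure μ]
    {n : ℕ} (f : (Fin n → ℝ) → ℝ)
    (hf_nonneg : ∀ x : Fin n → ℝ, 0 ≤ x → 0 ≤ f x)
    (hf_mono : ∀ x y : Fin n → ℝ, 0 ≤ x → x ≤ y → f x ≤ f y)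
    (hf_subadd : ∀ x y : Fin n → ℝ, 0 ≤ x → 0 ≤ y → f (x + y) ≤ f x + f y)
    (τ : Fin n → ℝ) (hτ : ∀ i, 0 ≤ τ i)
    (Z : Fin n → Ωs → ℝ)
    (hZ_nonneg : ∀ i ω, 0 ≤ Z i ω)
    (p : ℝ) (hp : 0 < p)
    (hZp : ∀ i, p ≤ (μ {ω | τ i < Z i ω}).toReal)
    (k : ℕ)
    (hint : ∀ S : Finset (Fin n),
      Integrable (fun ω => f (mask S (fun i => Z i ω))) μ) :
    ∀ S : Finset (Fin n), S.Nonempty → S.card ≤ k →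
      (p / k) * f (mask S τ) ≤ ∫ ω, f (mask S (fun i => Z i ω)) ∂μ := by
  intro S hS hSk
  have hτ : 0 ≤ τ := hτ
  obtain ⟨i, hiS, hi⟩ :=
    exists_apply_mask_div_card_le_apply_mask_singleton f hf_subadd hτ hS
  have hfS : 0 ≤ f (mask S τ) := hf_nonneg _ (mask_nonneg hτ)
  have hfi : 0 ≤ f (mask {i} τ) := hf_nonneg _ (mask_nonneg hτ)
  have hevent : {ω | τ i < Z i ω} ⊆ {ω | f (mask {i} τ) ≤ f (mask S (fun j => Z j ω))} :=
    fun ω hω => hf_mono _ _ (mask_nonneg hτ) <|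
      mask_le_mask (by simpa using hiS) (by simpa using le_of_lt hω) (fun j => hZ_nonneg j ω)
  calc (p / k) * f (mask S τ)
      = p * (f (mask S τ) / k) := by ring
    _ ≤ p * (f (mask S τ) / S.card) := by gcongr
    _ ≤ μ.real {ω | τ i < Z i ω} * f (mask {i} τ) :=
        mul_le_mul (hZp i) hi (div_nonneg hfS S.card.cast_nonneg) measureReal_nonneg
    _ ≤ μ.real {ω | f (mask {i} τ) ≤ f (mask S (fun j => Z j ω))} * f (mask {i} τ) :=
        mul_le_mul_of_nonneg_right (measureReal_mono hevent) hfi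
    _ ≤ ∫ ω, f (mask S (fun j => Z j ω)) ∂μ := by
        rw [mul_comm]
        exact mul_meas_ge_le_integral_of_nonneg
          (Filter.Eventually.of_forall fun ω => hf_nonneg _ (mask_nonneg fun j => hZ_nonneg j ω))
          (hint S) _

/-- If `f` is monotone and subadditive on the nonnegative orthant and each nonnegative
random variable `Z i` exceeds the threshold `τ i` with probability at least `p > 0`,
then `E[f(Z_S)] ≥ (p/k) · f(τ_S)` for every nonempty `S` with `|S| ≤ k`. -/
theorem expectation_mask_ge_threshold
    {Ωs : Type*} [MeasurableSpace Ωs] (μ : Measure Ωs) [IsProbabilityMeasure μ]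
    {n : ℕ} (f : (Fin n → ℝ) → ℝ)
    (hf_meas : Measurable f)
    (hf_nonneg : ∀ x : Fin n → ℝ, 0 ≤ x → 0 ≤ f x)
    (hf_mono : ∀ x y : Fin n → ℝ, 0 ≤ x → x ≤ y → f x ≤ f y)
    (hf_subadd : ∀ x y : Fin n → ℝ, 0 ≤ x → 0 ≤ y → f (x + y) ≤ f x + f y)
    (τ : Fin n → ℝ) (hτ : ∀ i, 0 ≤ τ i)
    (Z : Fin n → Ωs → ℝ)
    (hZ_meas : ∀ i, Measurable (Z i))
    (hZ_nonneg : ∀ i ω, 0 ≤ Z i ω)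
    (p : ℝ) (hp : 0 < p)
    (hZp : ∀ i, p ≤ (μ {ω | τ i < Z i ω}).toReal)
    (k : ℕ) (hk : 1 ≤ k)
    (hint : ∀ S : Finset (Fin n),
      Integrable (fun ω => f (mask S (fun i => Z i ω))) μ) :
    ∀ S : Finset (Fin n), S.Nonempty → S.card ≤ k →
      (p / k) * f (mask S τ) ≤ ∫ ω, f (mask S (fun i => Z i ω)) ∂μ :=
  expectation_mask_ge_threshold_general μ f hf_nonneg hf_mono hf_subadd τ hτ Z hZ_nonneg p hp hZp k
    hint
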